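/- Let G be a finitely generated group, S a nonempty finite set, and X a subshift of S^G with the right shift action T. Then X is a subshift of finite type if and only if the action of G on X has the pseudo-orbit tracing property. -/

import Mathlib

/-!
Since `S^G` is compact, the metric uniformity is the product uniformity: for small `δ`,
being `δ`-close means agreeing on a prescribed finite window, and agreeing on a suitable
finite window means being `ε`-close.

If `X` is of finite type, then in a `δ`-pseudo-orbit `xs` the symbols propagate along the
generators: the set of `g` with `xs (g * k) h = xs k (h * g)` on every given window (for `δ`
small enough) is a subgroup containing `A`, hence everything. So `x g := xs g 1` traces `xs`,
and `x ∈ X` because each `F`-window of `x` is one of `xs g`.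

Conversely, given the tracing property, take `F` so large that, for a configuration `y` whose
`F`-windows all occur in `X`, any choice of points `xs g ∈ X` showing the windows of `y`
at `g` is a `δ`-pseudo-orbit; the point tracing it agrees with `y` at every `g`, so `y ∈ X`.
-/

open Filter Set Topology Uniformity
open scoped Pointwise

section Window

variable {G Sy : Type*} [Finite Sy] [tS : TopologicalSpace Sy] [DiscreteTopology Sy]
  [m : MetricSpace (G → Sy)]
  (hcompat : m.toUniformSpace.toTopologicalSpace =
    (Pi.topologicalSpace : TopologicalSpace (G → Sy)))
include hcompat

theorem uniformity_hasBasis_eqOn :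
    (𝓤 (G → Sy)).HasBasis (fun _ : Finset G => True) fun E => {p | EqOn p.1 p.2 E} := by
  obtain rfl : tS = ⊥ := DiscreteTopology.eq_bot
  have hpi : m.toUniformSpace = @Pi.uniformSpace G (fun _ => Sy) fun _ => ⊥ :=
    unique_uniformity_of_compact (t := @Pi.topologicalSpace G (fun _ => Sy) fun _ => ⊥)
      hcompat rfl
  have hprincipal :
      𝓤 (G → Sy) = ⨅ h : G, 𝓟 {p : (G → Sy) × (G → Sy) | p.1 h = p.2 h} := by
    rw [hpi, @Pi.uniformity G (fun _ => Sy) fun _ => ⊥]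
    simp only [bot_uniformity, comap_principal]
    rfl
  rw [hprincipal]
  exact (hasBasis_iInf_principal_finite _).to_hasBasis
    (fun t ht => ⟨ht.toFinset, trivial,
      fun _ hp => mem_iInter₂.2 fun _ hh => hp (ht.mem_toFinset.2 hh)⟩)
    fun E _ => ⟨E, E.finite_toSet, fun _ hp => mem_iInter₂.1 hp⟩

theorem eventually_eqOn_of_dist_lt (E : Finset G) :
    ∀ᶠ δ in 𝓝[>] (0 : ℝ), ∀ u v : G → Sy, dist u v < δ → EqOn u v E := by
  obtain ⟨ε, hε, hsub⟩ :=
    Metric.mem_uniformity_dist.1 ((uniformity_hasBasis_eqOn hcompat).mem_of_mem (i := E) trivial)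
  filter_upwards [Ioc_mem_nhdsGT hε] with δ hδ u v huv using hsub (huv.trans_le hδ.2)

theorem exists_dist_lt_of_eqOn {ε : ℝ} (hε : 0 < ε) :
    ∃ E : Finset G, ∀ u v : G → Sy, EqOn u v E → dist u v < ε := by
  obtain ⟨E, -, hE⟩ :=
    (uniformity_hasBasis_eqOn hcompat).mem_iff.1 (Metric.dist_mem_uniformity hε)
  exact ⟨E, fun u v huv => @hE (u, v) huv⟩

end Window

section PseudoOrbit

variable {G Sy : Type*} [Group G] [m : MetricSpace (G → Sy)]

def IsPseudoOrbit (A : Finset G) (δ : ℝ) (xs : G → G → Sy) : Prop :=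
  ∀ a ∈ A, ∀ g : G, dist (fun h : G => xs g (h * a)) (xs (a * g)) < δ

def IsSubshiftOfFiniteType (X : Set (G → Sy)) : Prop :=
  ∃ (F : Finset G) (P : Set (F → Sy)), F.Nonempty ∧
    X = {x : G → Sy | ∀ g : G, (fun a : F => x ((a : G) * g)) ∈ P}

def HasPseudoOrbitTracing (A : Finset G) (X : Set (G → Sy)) : Prop :=
  ∀ ε > (0 : ℝ), ∃ δ > (0 : ℝ), ∀ xs : G → G → Sy, (∀ g : G, xs g ∈ X) →
    IsPseudoOrbit A δ xs →
      ∃ x ∈ X, ∀ g : G, dist (fun h : G => x (h * g)) (xs g) < ε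

theorem isPseudoOrbit_of_eqOn {A K F : Finset G} {δ : ℝ}
    (hK : ∀ u v : G → Sy, EqOn u v K → dist u v < δ) (hKF : K ⊆ F)
    (hKAF : ∀ h ∈ K, ∀ a ∈ A, h * a ∈ F)
    {y : G → Sy} {xs : G → G → Sy} (hxs : ∀ g : G, ∀ h ∈ F, xs g h = y (h * g)) :
    IsPseudoOrbit A δ xs := fun a ha g => hK _ _ fun h hh => by
  rw [hxs g _ (hKAF h hh a ha), hxs _ h (hKF hh), mul_assoc]

variable [Finite Sy] [TopologicalSpace Sy] [DiscreteTopology Sy]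
  (hcompat : m.toUniformSpace.toTopologicalSpace =
    (Pi.topologicalSpace : TopologicalSpace (G → Sy)))
include hcompat

theorem eventually_isPseudoOrbit_apply_mul {A : Finset G} {g : G}
    (hg : g ∈ Subgroup.closure (A : Set G)) (E : Finset G) :
    ∀ᶠ δ in 𝓝[>] (0 : ℝ), ∀ xs : G → G → Sy, IsPseudoOrbit A δ xs →
      ∀ k : G, ∀ h ∈ E, xs (g * k) h = xs k (h * g) := by
  classical
  induction hg using Subgroup.closure_induction generalizing E with
  | mem a ha =>
    filter_upwards [eventually_eqOn_of_dist_lt hcompat E] with δ hδ xs hxs k h hh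
    exact (hδ _ _ (hxs a ha k) hh).symm
  | one => exact .of_forall fun _ _ _ k h _ => by simp
  | mul g g' _ _ ihg ihg' =>
    filter_upwards [ihg E, ihg' (E.image (· * g))] with δ hg hg' xs hxs k h hh
    calc xs (g * g' * k) h = xs (g' * k) (h * g) := by rw [mul_assoc, hg xs hxs _ h hh]
      _ = xs k (h * (g * g')) := by
        rw [hg' xs hxs k _ (Finset.mem_image_of_mem _ hh), mul_assoc]
  | inv g _ ih =>
    filter_upwards [ih (E.image (· * g⁻¹))] with δ hg xs hxs k h hh
    simpa using (hg xs hxs (g⁻¹ * k) _ (Finset.mem_image_of_mem _ hh)).symm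

theorem eventually_isPseudoOrbit_eqOn {A : Finset G}
    (hAgen : Subgroup.closure (A : Set G) = ⊤) (W : Finset G) :
    ∀ᶠ δ in 𝓝[>] (0 : ℝ), ∀ xs : G → G → Sy, IsPseudoOrbit A δ xs →
      ∀ g : G, ∀ h ∈ W, xs (h * g) 1 = xs g h := by
  have hW := (eventually_all_finset W).2 fun h _ =>
    eventually_isPseudoOrbit_apply_mul hcompat (hAgen ▸ Subgroup.mem_top h) {1}
  filter_upwards [hW] with δ hδ xs hxs g h hh
  simpa using hδ h hh xs hxs g 1 (Finset.mem_singleton_self 1)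

theorem hasPseudoOrbitTracing_of_isSubshiftOfFiniteType {A : Finset G}
    (hAgen : Subgroup.closure (A : Set G) = ⊤) {X : Set (G → Sy)}
    (hX : IsSubshiftOfFiniteType X) : HasPseudoOrbitTracing A X := by
  classical
  obtain ⟨F, P, -, rfl⟩ := hX
  intro ε hε
  obtain ⟨E, hE⟩ := exists_dist_lt_of_eqOn hcompat hε
  obtain ⟨δ, hδ, hδ0⟩ :=
    ((eventually_isPseudoOrbit_eqOn hcompat hAgen (E ∪ F)).and self_mem_nhdsWithin).exists
  refine ⟨δ, hδ0, fun xs hxsX hxs => ⟨fun g => xs g 1, fun g => ?_, fun g => ?_⟩⟩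
  · convert hxsX g 1 using 1
    funext a
    simpa using hδ xs hxs g a (Finset.mem_union_right _ a.2)
  · exact hE _ _ fun h hh => hδ xs hxs g h (Finset.mem_union_left _ hh)

theorem isSubshiftOfFiniteType_of_hasPseudoOrbitTracing {A : Finset G} {X : Set (G → Sy)}
    (hXinv : ∀ g : G, ∀ x ∈ X, (fun h : G => x (h * g)) ∈ X)
    (hX : HasPseudoOrbitTracing A X) : IsSubshiftOfFiniteType X := by
  classical
  obtain ⟨ε, hε, hε0⟩ :=
    ((eventually_eqOn_of_dist_lt hcompat {1}).and self_mem_nhdsWithin).exists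
  obtain ⟨δ, hδ0, htrace⟩ := hX ε hε0
  obtain ⟨K, hK⟩ := exists_dist_lt_of_eqOn hcompat hδ0
  -- `1 ∈ F` pins down `y` from its windows; `K ∪ K * A ⊆ F` makes them a `δ`-pseudo-orbit.
  let F : Finset G := insert 1 (K ∪ K * A)
  refine ⟨F, (fun x (a : F) => x a) '' X, Finset.insert_nonempty _ _,
    Set.ext fun y => ⟨fun hy g => ⟨_, hXinv g y hy, rfl⟩, fun hy => ?_⟩⟩
  choose xs hxsX hxsy using hy
  have hxs : ∀ g, ∀ h ∈ F, xs g h = y (h * g) :=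
    fun g h hh => congrFun (hxsy g) ⟨h, hh⟩
  obtain ⟨x, hxX, hx⟩ := htrace xs hxsX <| isPseudoOrbit_of_eqOn hK
    (Finset.union_subset_left (Finset.subset_insert _ _))
    (fun h hh a ha =>
      Finset.mem_insert_of_mem (Finset.mem_union_right _ (Finset.mul_mem_mul hh ha)))
    hxs
  convert hxX
  funext g
  have hxg : x (1 * g) = xs g 1 := hε _ _ (hx g) (Finset.mem_singleton_self 1)
  simpa [hxs g 1 (Finset.mem_insert_self _ _)] using hxg.symm

end PseudoOrbit

theorem sft_iff_potp_general
    {G Sy : Type*} [Group G] [Finite Sy]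
    [TopologicalSpace Sy] [DiscreteTopology Sy]
    [m : MetricSpace (G → Sy)]
    (hcompat : m.toUniformSpace.toTopologicalSpace =
      (Pi.topologicalSpace : TopologicalSpace (G → Sy)))
    (A : Finset G) (hAgen : Subgroup.closure (A : Set G) = ⊤)
    (X : Set (G → Sy))
    (hXinv : ∀ g : G, ∀ x ∈ X, (fun h : G => x (h * g)) ∈ X) :
    (∃ (F : Finset G) (P : Set (F → Sy)), F.Nonempty ∧
        X = {x : G → Sy | ∀ g : G, (fun a : F => x ((a : G) * g)) ∈ P}) ↔
    (∀ ε > (0 : ℝ), ∃ δ > (0 : ℝ), ∀ xs : G → (G → Sy), (∀ g : G, xs g ∈ X) →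
        (∀ a ∈ A, ∀ g : G, dist (fun h : G => xs g (h * a)) (xs (a * g)) < δ) →
          ∃ x ∈ X, ∀ g : G, dist (fun h : G => x (h * g)) (xs g) < ε) :=
  ⟨hasPseudoOrbitTracing_of_isSubshiftOfFiniteType hcompat hAgen,
    isSubshiftOfFiniteType_of_hasPseudoOrbitTracing hcompat hXinv⟩

/-- A subshift `X` of the full shift `S^G` (right shift action `(gx)_h = x_{hg}`, product
topology with a compatible metric) is of finite type iff the shift action of `G` on `X`
has the pseudo-orbit tracing property. -/
theorem sft_iff_potp
    {G Sy : Type*} [Group G] [Finite Sy] [Nonempty Sy]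
    [TopologicalSpace Sy] [DiscreteTopology Sy]
    [m : MetricSpace (G → Sy)]
    (hcompat : m.toUniformSpace.toTopologicalSpace =
      (Pi.topologicalSpace : TopologicalSpace (G → Sy)))
    (A : Finset G) (hAgen : Subgroup.closure (A : Set G) = ⊤)
    (hAsymm : ∀ a ∈ A, a⁻¹ ∈ A)
    (X : Set (G → Sy)) (hXclosed : IsClosed X)
    (hXinv : ∀ g : G, ∀ x ∈ X, (fun h : G => x (h * g)) ∈ X) :
    (∃ (F : Finset G) (P : Set (F → Sy)), F.Nonempty ∧
        X = {x : G → Sy | ∀ g : G, (fun a : F => x ((a : G) * g)) ∈ P}) ↔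
    (∀ ε > (0 : ℝ), ∃ δ > (0 : ℝ), ∀ xs : G → (G → Sy), (∀ g : G, xs g ∈ X) →
        (∀ a ∈ A, ∀ g : G, dist (fun h : G => xs g (h * a)) (xs (a * g)) < δ) →
        ∃ x ∈ X, ∀ g : G, dist (fun h : G => x (h * g)) (xs g) < ε) :=
  sft_iff_potp_general (m := m) hcompat A hAgen X hXinv
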